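/- Let D ≥ 1 be a natural number, σ > 0, α > 1 a real number, and let r_1, …, r_D > 0 be weights with Σ_{d=1}^D r_d = 1. For each d set σ_d² := σ²/(D·r_d). Let a ∈ ℝ^D and t ∈ ℝ^D be arbitrary. Then (α−1)⁻¹·ln ∫_{ℝ^D} (∏_{d=1}^D φ_{a_d,σ_d²}(x_d))^α · (∏_{d=1}^D φ_{a_d+t_d,σ_d²}(x_d))^{1−α} dx = α·D·(Σ_{d=1}^D r_d·t_d²)/(2σ²). -/

import Mathlib

/-!
Each coordinate contributes independently: the integrand is a product over coordinates, so the
integral factors. In one dimension, `φ_{a,v}^α · φ_{a+t,v}^{1-α}` is, after completing the square,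
`exp (α (α - 1) t² / (2v))` times the Gaussian density centred at `a + (1 - α) t`, which
integrates to one. Summing the exponents, `v_d = σ² / (D r_d)` turns them into
`(α - 1) α D r_d t_d² / (2σ²)`.
-/

open MeasureTheory Real

/-- Gaussian density with mean `μ` and variance `v`. -/
noncomputable def gaussPDF (μ v x : ℝ) : ℝ :=
  (Real.sqrt (2 * Real.pi * v))⁻¹ * Real.exp (-(x - μ) ^ 2 / (2 * v))

lemma gaussPDF_eq_gaussianPDFReal (μ : ℝ) {v : ℝ} (hv : 0 ≤ v) (x : ℝ) :
    gaussPDF μ v x = ProbabilityTheory.gaussianPDFReal μ ⟨v, hv⟩ x := rfl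

lemma gaussPDF_nonneg (μ : ℝ) {v : ℝ} (hv : 0 ≤ v) (x : ℝ) : 0 ≤ gaussPDF μ v x := by
  rw [gaussPDF_eq_gaussianPDFReal μ hv]
  exact ProbabilityTheory.gaussianPDFReal_nonneg _ _ _

lemma integral_gaussPDF (μ : ℝ) {v : ℝ} (hv : 0 < v) : ∫ x, gaussPDF μ v x = 1 := by
  simp_rw [gaussPDF_eq_gaussianPDFReal μ hv.le]
  exact ProbabilityTheory.integral_gaussianPDFReal_eq_one μ (NNReal.coe_ne_zero.1 hv.ne')

lemma gaussPDF_rpow_mul_rpow (a t α : ℝ) {v : ℝ} (hv : 0 < v) (x : ℝ) :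
    gaussPDF a v x ^ α * gaussPDF (a + t) v x ^ (1 - α) =
      exp (α * (α - 1) * t ^ 2 / (2 * v)) * gaussPDF (a + (1 - α) * t) v x := by
  set C := (√(2 * π * v))⁻¹
  have hC : 0 < C := by positivity
  have hCC : C ^ α * C ^ (1 - α) = C := by rw [← rpow_add hC]; simp
  have hexp : -(x - a) ^ 2 / (2 * v) * α + -(x - (a + t)) ^ 2 / (2 * v) * (1 - α) =
      α * (α - 1) * t ^ 2 / (2 * v) + -(x - (a + (1 - α) * t)) ^ 2 / (2 * v) := by
    field_simp; ring
  unfold gaussPDF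
  rw [mul_rpow hC.le (exp_pos _).le, mul_rpow hC.le (exp_pos _).le, ← exp_mul, ← exp_mul]
  calc C ^ α * exp (-(x - a) ^ 2 / (2 * v) * α) *
        (C ^ (1 - α) * exp (-(x - (a + t)) ^ 2 / (2 * v) * (1 - α)))
      = (C ^ α * C ^ (1 - α)) *
          exp (-(x - a) ^ 2 / (2 * v) * α + -(x - (a + t)) ^ 2 / (2 * v) * (1 - α)) := by
        rw [exp_add]; ring
    _ = _ := by rw [hCC, hexp, exp_add]; ring

lemma integral_gaussPDF_rpow_mul_rpow (a t α : ℝ) {v : ℝ} (hv : 0 < v) :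
    ∫ x, gaussPDF a v x ^ α * gaussPDF (a + t) v x ^ (1 - α) =
      exp (α * (α - 1) * t ^ 2 / (2 * v)) := by
  simp_rw [gaussPDF_rpow_mul_rpow a t α hv]
  rw [integral_const_mul, integral_gaussPDF _ hv, mul_one]

lemma integral_prod_gaussPDF_rpow_mul_rpow {ι : Type*} [Fintype ι] (a t v : ι → ℝ) (α : ℝ)
    (hv : ∀ i, 0 < v i) :
    ∫ x : ι → ℝ, (∏ i, gaussPDF (a i) (v i) (x i)) ^ α *
        (∏ i, gaussPDF (a i + t i) (v i) (x i)) ^ (1 - α) =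
      exp (∑ i, α * (α - 1) * t i ^ 2 / (2 * v i)) := by
  have hnonneg (b : ι → ℝ) (x : ι → ℝ) (i : ι) (_ : i ∈ Finset.univ) :
      0 ≤ gaussPDF (b i) (v i) (x i) :=
    gaussPDF_nonneg _ (hv i).le _
  simp_rw [← finsetProd_rpow _ _ (hnonneg _ _), ← Finset.prod_mul_distrib]
  rw [volume_pi, integral_fintype_prod_eq_prod
    (fun i x ↦ gaussPDF (a i) (v i) x ^ α * gaussPDF (a i + t i) (v i) x ^ (1 - α)), exp_sum]
  exact Finset.prod_congr rfl fun i _ ↦ integral_gaussPDF_rpow_mul_rpow _ _ _ (hv i)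

theorem renyi_nonspherical_gauss_eq_general (D : ℕ) (σ α : ℝ) (hσ : 0 < σ) (hα : 1 < α)
    (r : Fin D → ℝ) (a t : Fin D → ℝ)
    (hr : ∀ d, 0 < r d) :
    (α - 1)⁻¹ * Real.log (∫ x : Fin D → ℝ,
        (∏ d, gaussPDF (a d) (σ ^ 2 / (D * r d)) (x d)) ^ α *
        (∏ d, gaussPDF (a d + t d) (σ ^ 2 / (D * r d)) (x d)) ^ (1 - α)) =
      α * D * (∑ d, r d * t d ^ 2) / (2 * σ ^ 2) := by
  have hD (d : Fin D) : (0 : ℝ) < D := Nat.cast_pos.2 d.pos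
  have hv (d : Fin D) : 0 < σ ^ 2 / (D * r d) := by have := hD d; have := hr d; positivity
  have hexponent (d : Fin D) : α * (α - 1) * t d ^ 2 / (2 * (σ ^ 2 / (D * r d))) =
      (α - 1) * (α * D * (r d * t d ^ 2) / (2 * σ ^ 2)) := by
    have := (hD d).ne'; have := (hr d).ne'
    field_simp
  rw [integral_prod_gaussPDF_rpow_mul_rpow _ _ _ _ hv, log_exp]
  simp_rw [hexponent, ← Finset.mul_sum, ← Finset.sum_div, ← Finset.mul_sum]
  rw [← mul_assoc, inv_mul_cancel₀ (by linarith), one_mul]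

theorem renyi_nonspherical_gauss_eq (D : ℕ) (hD : 1 ≤ D) (σ α : ℝ) (hσ : 0 < σ) (hα : 1 < α)
    (r : Fin D → ℝ) (a t : Fin D → ℝ)
    (hr : ∀ d, 0 < r d) (hrsum : ∑ d, r d = 1) :
    (α - 1)⁻¹ * Real.log (∫ x : Fin D → ℝ,
        (∏ d, gaussPDF (a d) (σ ^ 2 / (D * r d)) (x d)) ^ α *
        (∏ d, gaussPDF (a d + t d) (σ ^ 2 / (D * r d)) (x d)) ^ (1 - α)) =
      α * D * (∑ d, r d * t d ^ 2) / (2 * σ ^ 2) :=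
  renyi_nonspherical_gauss_eq_general D σ α hσ hα r a t hr
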